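/- arXiv:1912.00373 — 4 statements merged into one kernel-verified Lean document; each statement's English description precedes it below -/
import Mathlib

section
/- Let b: ℝ³→ℝ³ be a smooth field, A = diag(a1,a2,a3), and consider the brackets {γ_i,γ_j} = 0, {M_i,γ_j} = ε_{ijk}γ_k, {M_i,M_j} = ε_{ijk}(M_k + b_k(γ)) together with the Hamiltonian H(γ,M) = ½(M, AM) + V(γ). Then the Hamiltonian equations ẋ_i = {H, x_i} coincide exactly with the Euler–Poisson equations in a solenoidal field: γ̇ = γ×ω, Ṁ = (M + b)×ω − ∇V(γ)×γ, where ω = AM. -/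
noncomputable section

/-- ℝ³ as a phase-space component. -/
abbrev V3 := Fin 3 → ℝ

/-- Cross product on ℝ³. -/
def cross3 (a b : V3) : V3 :=
  ![a 1 * b 2 - a 2 * b 1, a 2 * b 0 - a 0 * b 2, a 0 * b 1 - a 1 * b 0]

/-- Euclidean inner product on ℝ³. -/
def dot3 (a b : V3) : ℝ := a 0 * b 0 + a 1 * b 1 + a 2 * b 2

/-- Partial derivative of a scalar function on ℝ³ in the `i`-th coordinate direction. -/
def pd3 (f : V3 → ℝ) (γ : V3) (i : Fin 3) : ℝ := fderiv ℝ f γ (Pi.single i 1)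

/-- Gradient of a scalar function on ℝ³. -/
def grad3 (V : V3 → ℝ) (γ : V3) : V3 := fun i => pd3 V γ i

/-- Curl (rot) of a vector field on ℝ³. -/
def curl3 (b : V3 → V3) (γ : V3) : V3 :=
  ![pd3 (fun x => b x 2) γ 1 - pd3 (fun x => b x 1) γ 2,
    pd3 (fun x => b x 0) γ 2 - pd3 (fun x => b x 2) γ 0,
    pd3 (fun x => b x 1) γ 0 - pd3 (fun x => b x 0) γ 1]

/-- Divergence of a vector field on ℝ³. -/
def div3 (F : V3 → V3) (γ : V3) : ℝ := ∑ i : Fin 3, pd3 (fun x => F x i) γ i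

/-- Action of the diagonal matrix `A = diag (a 0, a 1, a 2)` on a vector. -/
def dvec (a x : V3) : V3 := fun i => a i * x i

/-- Nonholonomic angular velocity of the Chaplygin sphere:
`ω = A_γ M = A M + d (γ, A M) g⁻² A γ`, with `g² = 1 - d (γ, A γ)`. -/
def omegaCh (a : V3) (d : ℝ) (γ M : V3) : V3 :=
  fun i => a i * M i + d * dot3 γ (dvec a M) * (1 - d * dot3 γ (dvec a γ))⁻¹ * (a i * γ i)

/-- The function `g(γ) = √(1 - d (γ, A γ))`. -/
def gfun (a : V3) (d : ℝ) (γ : V3) : ℝ := Real.sqrt (1 - d * dot3 γ (dvec a γ))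

/-- Total mechanical energy of the Chaplygin sphere: `H = ½ (M, A_γ M) + V(γ)`. -/
def Hch (a : V3) (d : ℝ) (V : V3 → ℝ) (p : V3 × V3) : ℝ :=
  (1 / 2) * dot3 p.2 (omegaCh a d p.1 p.2) + V p.1

/-- Divergence of a vector field on the phase space ℝ³ × ℝ³ ∋ (γ, M). -/
def divPhase (X : V3 × V3 → V3 × V3) (p : V3 × V3) : ℝ :=
  (∑ i : Fin 3, fderiv ℝ (fun q => (X q).1 i) p (Pi.single i 1, (0 : V3))) +
  (∑ i : Fin 3, fderiv ℝ (fun q => (X q).2 i) p ((0 : V3), Pi.single i 1))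

/-- The totally antisymmetric symbol `ε_{ijk}` with `ε_{123} = 1`. -/
def eps (i j k : Fin 3) : ℝ :=
  (((i : ℕ) : ℝ) - ((j : ℕ) : ℝ)) * (((j : ℕ) : ℝ) - ((k : ℕ) : ℝ)) *
    (((k : ℕ) : ℝ) - ((i : ℕ) : ℝ)) / 2

/-- Standard basis vectors of the phase space ℝ³ × ℝ³, indexed by `Fin 3 ⊕ Fin 3`
(`inl` = γ-coordinates, `inr` = M-coordinates). -/
def bvec : Fin 3 ⊕ Fin 3 → V3 × V3
  | Sum.inl i => (Pi.single i 1, 0)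
  | Sum.inr i => (0, Pi.single i 1)

/-- The vector field of equations (eq-g):
`γ̇ = γ×ω`, `Ṁ = (M + Bγ + α)×ω + (Cω − ∇V(γ))×γ`. -/
def Xeqg (B C : Matrix (Fin 3) (Fin 3) ℝ) (α : V3) (V : V3 → ℝ)
    (ω : V3 × V3 → V3) (p : V3 × V3) : V3 × V3 :=
  (cross3 p.1 (ω p),
   cross3 (p.2 + B.mulVec p.1 + α) (ω p) + cross3 (C.mulVec (ω p) - grad3 V p.1) p.1)

/-- The bivector `P_φ`: `{γ_i,γ_j} = 0`, `{M_i,γ_j} = ε_{ijk}γ_k`,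
`{M_i,M_j} = ε_{ijk}(M_k + b_k(γ))`. -/
def Pphi (b : V3 → V3) (p : V3 × V3) (r s : Fin 3 ⊕ Fin 3) : ℝ :=
  match r, s with
  | Sum.inl _, Sum.inl _ => 0
  | Sum.inr i, Sum.inl j => ∑ k, eps i j k * p.1 k
  | Sum.inl i, Sum.inr j => -(∑ k, eps j i k * p.1 k)
  | Sum.inr i, Sum.inr j => ∑ k, eps i j k * (p.2 k + b p.1 k)

/-- The bivector `P_{ψφ}`: `{γ_i,γ_j} = 0`, `{M_i,γ_j} = g ε_{ijk}γ_k`,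
`{M_i,M_j} = g ε_{ijk}(M_k + b_k(γ)) − (d/g)(M, Aγ) ε_{ijk}γ_k`. -/
def Ppsiphi (a : V3) (d : ℝ) (b : V3 → V3) (p : V3 × V3) (r s : Fin 3 ⊕ Fin 3) : ℝ :=
  match r, s with
  | Sum.inl _, Sum.inl _ => 0
  | Sum.inr i, Sum.inl j => gfun a d p.1 * ∑ k, eps i j k * p.1 k
  | Sum.inl i, Sum.inr j => -(gfun a d p.1 * ∑ k, eps j i k * p.1 k)
  | Sum.inr i, Sum.inr j =>
      gfun a d p.1 * (∑ k, eps i j k * (p.2 k + b p.1 k)) -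
        d / gfun a d p.1 * dot3 p.2 (dvec a p.1) * ∑ k, eps i j k * p.1 k

/-- The Jacobi identity expression
`Σ_l (P_{li} ∂_l P_{jk} + P_{lj} ∂_l P_{ki} + P_{lk} ∂_l P_{ij})` at a point. -/
def jacobiAt (P : V3 × V3 → (Fin 3 ⊕ Fin 3) → (Fin 3 ⊕ Fin 3) → ℝ)
    (p : V3 × V3) (i j k : Fin 3 ⊕ Fin 3) : ℝ :=
  ∑ l : Fin 3 ⊕ Fin 3,
    (P p l i * fderiv ℝ (fun q => P q j k) p (bvec l) +
     P p l j * fderiv ℝ (fun q => P q k i) p (bvec l) +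
     P p l k * fderiv ℝ (fun q => P q i j) p (bvec l))

/-- The `s`-component `{H, x_s} = Σ_r ∂H/∂x_r P_{r s}` of the Hamiltonian vector field
generated by `H` and the bivector `P`. -/
def hamVF (P : V3 × V3 → (Fin 3 ⊕ Fin 3) → (Fin 3 ⊕ Fin 3) → ℝ)
    (H : V3 × V3 → ℝ) (p : V3 × V3) (s : Fin 3 ⊕ Fin 3) : ℝ :=
  ∑ r : Fin 3 ⊕ Fin 3, fderiv ℝ H p (bvec r) * P p r s


lemma hasFDerivAt_H (a : V3) (V : V3 → ℝ) (hV : ContDiff ℝ (⊤ : ℕ∞) V) (p : V3 × V3) :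
    HasFDerivAt (fun q : V3 × V3 => (1 / 2) * dot3 q.2 (dvec a q.2) + V q.1)
      (((1/2 : ℝ) • (∑ i : Fin 3,
          ((p.2 i • ((a i) • (ContinuousLinearMap.proj i : V3 →L[ℝ] ℝ)) +
            (a i * p.2 i) • (ContinuousLinearMap.proj i : V3 →L[ℝ] ℝ)))).comp
          (ContinuousLinearMap.snd ℝ V3 V3)) +
        (fderiv ℝ V p.1).comp (ContinuousLinearMap.fst ℝ V3 V3)) p := by
  have hproj : ∀ i : Fin 3, HasFDerivAt (fun M : V3 => M i)
      (ContinuousLinearMap.proj i : V3 →L[ℝ] ℝ) p.2 := fun i =>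
    (ContinuousLinearMap.proj i : V3 →L[ℝ] ℝ).hasFDerivAt
  have hterm : ∀ i : Fin 3, HasFDerivAt (fun M : V3 => M i * (a i * M i))
      ((p.2 i) • ((a i) • (ContinuousLinearMap.proj i : V3 →L[ℝ] ℝ)) +
        (a i * p.2 i) • (ContinuousLinearMap.proj i : V3 →L[ℝ] ℝ)) p.2 := fun i =>
    (hproj i).mul ((hproj i).const_mul (a i))
  have hK : HasFDerivAt (fun M : V3 => (1/2 : ℝ) * dot3 M (dvec a M))
      ((1/2 : ℝ) • (∑ i : Fin 3,
        ((p.2 i • ((a i) • (ContinuousLinearMap.proj i : V3 →L[ℝ] ℝ)) +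
          (a i * p.2 i) • (ContinuousLinearMap.proj i : V3 →L[ℝ] ℝ))))) p.2 := by
    have hsum : HasFDerivAt (fun M : V3 => ∑ i : Fin 3, M i * (a i * M i))
        (∑ i : Fin 3,
          ((p.2 i • ((a i) • (ContinuousLinearMap.proj i : V3 →L[ℝ] ℝ)) +
            (a i * p.2 i) • (ContinuousLinearMap.proj i : V3 →L[ℝ] ℝ)))) p.2 :=
      HasFDerivAt.fun_sum (fun i _ => hterm i)
    have := hsum.fun_const_smul (1/2 : ℝ)
    simpa [dot3, dvec, Fin.sum_univ_three, smul_eq_mul, mul_add] using this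
  have hKc : HasFDerivAt (fun q : V3 × V3 => (1/2 : ℝ) * dot3 q.2 (dvec a q.2))
      (((1/2 : ℝ) • (∑ i : Fin 3,
        ((p.2 i • ((a i) • (ContinuousLinearMap.proj i : V3 →L[ℝ] ℝ)) +
          (a i * p.2 i) • (ContinuousLinearMap.proj i : V3 →L[ℝ] ℝ))))).comp
        (ContinuousLinearMap.snd ℝ V3 V3)) p :=
    hK.comp p hasFDerivAt_snd
  have hVc : HasFDerivAt (fun q : V3 × V3 => V q.1)
      ((fderiv ℝ V p.1).comp (ContinuousLinearMap.fst ℝ V3 V3)) p :=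
    ((hV.differentiable (by simp)).differentiableAt.hasFDerivAt).comp p hasFDerivAt_fst
  simpa using hKc.fun_add hVc

lemma fderiv_H_inl (a : V3) (V : V3 → ℝ) (hV : ContDiff ℝ (⊤ : ℕ∞) V) (p : V3 × V3) (i : Fin 3) :
    fderiv ℝ (fun q : V3 × V3 => (1 / 2) * dot3 q.2 (dvec a q.2) + V q.1) p
      (Pi.single i 1, (0 : V3)) = grad3 V p.1 i := by
  rw [(hasFDerivAt_H a V hV p).fderiv]
  simp [grad3, pd3, Finset.sum_apply]

lemma fderiv_H_inr (a : V3) (V : V3 → ℝ) (hV : ContDiff ℝ (⊤ : ℕ∞) V) (p : V3 × V3) (i : Fin 3) :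
    fderiv ℝ (fun q : V3 × V3 => (1 / 2) * dot3 q.2 (dvec a q.2) + V q.1) p
      ((0 : V3), Pi.single i 1) = a i * p.2 i := by
  rw [(hasFDerivAt_H a V hV p).fderiv]
  simp [Fin.sum_univ_three, Pi.single_apply, Finset.sum_apply]
  fin_cases i <;> norm_num [Fin.ext_iff] <;> first | ring1 | (exact (by ring : 1/2*(p.2 2*a 2)+1/2*(a 2*p.2 2) = a 2 * p.2 2))

/-- The Hamiltonian equations `ẋ = {H, x}` generated by the bivector `P_φ`
and the Hamiltonian `H = ½(M, AM) + V(γ)` coincide with the Euler–Poisson equations in a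
solenoidal field: `γ̇ = γ×ω`, `Ṁ = (M + b)×ω − ∇V(γ)×γ`, `ω = AM`. -/
theorem euler_poisson_solenoidal_hamiltonian
    (a : V3) (b : V3 → V3) (hb : ContDiff ℝ (⊤ : ℕ∞) b)
    (V : V3 → ℝ) (hV : ContDiff ℝ (⊤ : ℕ∞) V)
    (p : V3 × V3) :
    (∀ i : Fin 3,
      hamVF (Pphi b) (fun q => (1 / 2) * dot3 q.2 (dvec a q.2) + V q.1) p (Sum.inl i) =
        cross3 p.1 (dvec a p.2) i) ∧
    (∀ i : Fin 3,
      hamVF (Pphi b) (fun q => (1 / 2) * dot3 q.2 (dvec a q.2) + V q.1) p (Sum.inr i) =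
        (cross3 (p.2 + b p.1) (dvec a p.2) - cross3 (grad3 V p.1) p.1) i) := by
  have hinl := fderiv_H_inl a V hV p
  have hinr := fderiv_H_inr a V hV p
  constructor <;> intro i <;>
  · simp only [hamVF, Fintype.sum_sum_type, bvec, hinl, hinr, Pphi,
      Fin.sum_univ_three, eps, cross3, dvec, grad3]
    fin_cases i <;> norm_num <;> ring
end
end

section
/- Consider the equations (eq-g) for a dynamically symmetric body: ω = AM with A = diag(a1,a1,a3), gyrostatic vector α = (0,0,α3), potential V(γ) = f(γ3) depending only on γ3, an arbitrary symmetric matrix C = (c_{ij}), and B = diag(b1 + c_{22}, b1 + c_{22}, b3 + c_{33}) − C with b1, b3 ∈ ℝ. Then the function K = M3 − c_{13}γ1 − c_{23}γ2 + (c_{11} − b1)γ3, linear in M, is a first integral of (eq-g). -/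
noncomputable section

lemma pd3_f3 (f : ℝ → ℝ) (hf : Differentiable ℝ f) (v : V3) (i : Fin 3) :
    pd3 (fun x => f (x 2)) v i = fderiv ℝ f (v 2) ((Pi.single i (1:ℝ) : V3) 2) := by
  have hproj : HasFDerivAt (fun x : V3 => x 2)
      (ContinuousLinearMap.proj (R := ℝ) (φ := fun _ : Fin 3 => ℝ) 2) v :=
    (ContinuousLinearMap.proj (R := ℝ) (φ := fun _ : Fin 3 => ℝ) 2).hasFDerivAt
  have hcomp : HasFDerivAt (fun x : V3 => f (x 2))
      ((fderiv ℝ f (v 2)).comp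
        (ContinuousLinearMap.proj (R := ℝ) (φ := fun _ : Fin 3 => ℝ) 2)) v :=
    (hf (v 2)).hasFDerivAt.comp v hproj
  rw [pd3, hcomp.fderiv]
  simp

/-- For a dynamically symmetric body, `ω = AM` with `A = diag(a1,a1,a3)`,
`α = (0,0,α3)`, `V(γ) = f(γ3)`, arbitrary symmetric `C` and
`B = diag(b1 + c22, b1 + c22, b3 + c33) − C`, the function
`K = M3 − c13 γ1 − c23 γ2 + (c11 − b1) γ3`, linear in `M`, is a first integral of (eq-g). -/
theorem eqg_symmetric_body_linear_integral
    (a1 a3 α3 b1 b3 : ℝ) (f : ℝ → ℝ) (hf : ContDiff ℝ (⊤ : ℕ∞) f)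
    (C : Matrix (Fin 3) (Fin 3) ℝ) (hC : C.IsSymm)
    (B : Matrix (Fin 3) (Fin 3) ℝ)
    (hB : B = Matrix.diagonal ![b1 + C 1 1, b1 + C 1 1, b3 + C 2 2] - C)
    (γ M : ℝ → V3)
    (hγ : ∀ t : ℝ, HasDerivAt γ
      ((Xeqg B C ![0, 0, α3] (fun x => f (x 2))
        (fun q => dvec ![a1, a1, a3] q.2) (γ t, M t)).1) t)
    (hM : ∀ t : ℝ, HasDerivAt M
      ((Xeqg B C ![0, 0, α3] (fun x => f (x 2))
        (fun q => dvec ![a1, a1, a3] q.2) (γ t, M t)).2) t)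
    (t : ℝ) :
    HasDerivAt (fun s =>
      M s 2 - C 0 2 * γ s 0 - C 1 2 * γ s 1 + (C 0 0 - b1) * γ s 2) 0 t := by
  have hγ0 := hasDerivAt_pi.1 (hγ t) 0
  have hγ1 := hasDerivAt_pi.1 (hγ t) 1
  have hγ2 := hasDerivAt_pi.1 (hγ t) 2
  have hM2 := hasDerivAt_pi.1 (hM t) 2
  have h := ((hM2.sub (hγ0.const_mul (C 0 2))).sub (hγ1.const_mul (C 1 2))).add
    (hγ2.const_mul (C 0 0 - b1))
  convert h using 1
  iterate 3 rfl
  have h01 : C 0 1 = C 1 0 := hC.apply 1 0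
  have h02 : C 0 2 = C 2 0 := hC.apply 2 0
  have h12 : C 1 2 = C 2 1 := hC.apply 2 1
  have hg0 : pd3 (fun x => f (x 2)) (γ t) 0 = 0 := by
    rw [pd3_f3 f (hf.differentiable (by simp))]; simp
  have hg1 : pd3 (fun x => f (x 2)) (γ t) 1 = 0 := by
    rw [pd3_f3 f (hf.differentiable (by simp))]; simp
  simp only [Xeqg, cross3, grad3, dvec, hB, Matrix.sub_mulVec, Matrix.mulVec,
    dotProduct, Fin.sum_univ_three, Matrix.diagonal, Matrix.sub_apply,
    Matrix.of_apply, Pi.add_apply, Pi.sub_apply, Matrix.cons_val_zero,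
    Matrix.cons_val_one, Matrix.head_cons, Matrix.cons_val_two, Matrix.tail_cons,
    hg0, hg1, Fin.reduceEq, reduceIte, if_true, if_false]
  rw [h01, h02, h12]
  ring
end
end

section
/- Let a ≠ 0, let C = diag(c1,c2,c3), let λ1, λ2, λ3 be pairwise distinct reals, and set B = diag((λ2c3 − λ3c2)/(λ2 − λ3), (λ1c3 − λ3c1)/(λ1 − λ3), (λ1c2 − λ2c1)/(λ1 − λ2)). Then F1 = λ1M1² + λ2M2² + λ3M3² is a first integral of the equations (koz-eqm): γ̇ = a(γ×M), Ṁ = a[(Bγ)×M + (CM)×γ]. -/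
noncomputable section

/-! `F1` is conserved because the `M`-equation is orthogonal to `∇F1 = 2 (λᵢ Mᵢ)`: the product
`(∇F1, Ṁ)` is a sum of the monomials `γₖ Mᵢ Mⱼ` (`{i, j, k} = {0, 1, 2}`), and the coefficient of
`γₖ Mᵢ Mⱼ` is `bₖ (λᵢ - λⱼ) - (λᵢ cⱼ - λⱼ cᵢ)`, which the choice of `B` makes vanish. -/

lemma dot3_smul_right (x y : V3) (r : ℝ) : dot3 x (r • y) = r * dot3 x y := by
  simp only [dot3, Pi.smul_apply, smul_eq_mul]
  ring

lemma mulVec_diagonal_eq_dvec (v x : V3) : (Matrix.diagonal v).mulVec x = dvec v x :=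
  funext fun i => Matrix.mulVec_diagonal v x i

lemma hasDerivAt_diag_quadratic (l : V3) {M : ℝ → V3} {M' : V3} {t : ℝ}
    (hM : HasDerivAt M M' t) :
    HasDerivAt (fun s => l 0 * (M s 0) ^ 2 + l 1 * (M s 1) ^ 2 + l 2 * (M s 2) ^ 2)
      (2 * dot3 (dvec l (M t)) M') t := by
  have hMi (i : Fin 3) : HasDerivAt (fun s => M s i) (M' i) t := hasDerivAt_pi.mp hM i
  have hF := ((((hMi 0).fun_pow 2).const_mul (l 0)).fun_add
    (((hMi 1).fun_pow 2).const_mul (l 1))).fun_add (((hMi 2).fun_pow 2).const_mul (l 2))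
  refine hF.congr_deriv ?_
  simp only [dot3, dvec]
  ring

lemma dot3_dvec_cross_add_cross_eq_zero {b c l : V3}
    (h0 : b 0 * (l 1 - l 2) = l 1 * c 2 - l 2 * c 1)
    (h1 : b 1 * (l 0 - l 2) = l 0 * c 2 - l 2 * c 0)
    (h2 : b 2 * (l 0 - l 1) = l 0 * c 1 - l 1 * c 0) (γ M : V3) :
    dot3 (dvec l M) (cross3 (dvec b γ) M + cross3 (dvec c M) γ) = 0 := by
  simp only [dot3, dvec, cross3, Pi.add_apply, Matrix.cons_val_zero, Matrix.cons_val_one,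
    Matrix.cons_val_two, Matrix.head_cons, Matrix.tail_cons]
  linear_combination (γ 1 * M 0 * M 2) * h1 - (γ 0 * M 1 * M 2) * h0 - (γ 2 * M 0 * M 1) * h2

def kozB (c l : V3) : V3 :=
  ![(l 1 * c 2 - l 2 * c 1) / (l 1 - l 2),
    (l 0 * c 2 - l 2 * c 0) / (l 0 - l 2),
    (l 0 * c 1 - l 1 * c 0) / (l 0 - l 1)]

lemma dot3_dvec_cross_kozB_eq_zero {c l : V3}
    (h01 : l 0 ≠ l 1) (h02 : l 0 ≠ l 2) (h12 : l 1 ≠ l 2) (γ M : V3) :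
    dot3 (dvec l M) (cross3 (dvec (kozB c l) γ) M + cross3 (dvec c M) γ) = 0 :=
  dot3_dvec_cross_add_cross_eq_zero (div_mul_cancel₀ _ (sub_ne_zero.mpr h12))
    (div_mul_cancel₀ _ (sub_ne_zero.mpr h02)) (div_mul_cancel₀ _ (sub_ne_zero.mpr h01)) γ M

theorem kozeqm_F1_first_integral_general
    (a : ℝ) (c l : V3)
    (h01 : l 0 ≠ l 1) (h02 : l 0 ≠ l 2) (h12 : l 1 ≠ l 2)
    (B : Matrix (Fin 3) (Fin 3) ℝ)
    (hB : B = Matrix.diagonal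
      ![(l 1 * c 2 - l 2 * c 1) / (l 1 - l 2),
        (l 0 * c 2 - l 2 * c 0) / (l 0 - l 2),
        (l 0 * c 1 - l 1 * c 0) / (l 0 - l 1)])
    (γ M : ℝ → V3)
    (hM : ∀ t : ℝ, HasDerivAt M (a • (cross3 (B.mulVec (γ t)) (M t) +
      cross3 ((Matrix.diagonal c).mulVec (M t)) (γ t))) t)
    (t : ℝ) :
    HasDerivAt (fun s =>
      l 0 * (M s 0) ^ 2 + l 1 * (M s 1) ^ 2 + l 2 * (M s 2) ^ 2) 0 t := by
  have hB' : B = Matrix.diagonal (kozB c l) := hB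
  convert hasDerivAt_diag_quadratic l (hM t) using 1
  rw [hB', mulVec_diagonal_eq_dvec, mulVec_diagonal_eq_dvec, dot3_smul_right,
    dot3_dvec_cross_kozB_eq_zero h01 h02 h12, mul_zero, mul_zero]

/-- For (koz-eqm) `γ̇ = a(γ×M)`, `Ṁ = a[(Bγ)×M + (CM)×γ]` with
`C = diag(c1,c2,c3)`, pairwise distinct `λ1, λ2, λ3` and
`B = diag((λ2c3 − λ3c2)/(λ2 − λ3), (λ1c3 − λ3c1)/(λ1 − λ3), (λ1c2 − λ2c1)/(λ1 − λ2))`,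
the function `F1 = λ1M1² + λ2M2² + λ3M3²` is a first integral. -/
theorem kozeqm_F1_first_integral
    (a : ℝ) (ha : a ≠ 0) (c l : V3)
    (h01 : l 0 ≠ l 1) (h02 : l 0 ≠ l 2) (h12 : l 1 ≠ l 2)
    (B : Matrix (Fin 3) (Fin 3) ℝ)
    (hB : B = Matrix.diagonal
      ![(l 1 * c 2 - l 2 * c 1) / (l 1 - l 2),
        (l 0 * c 2 - l 2 * c 0) / (l 0 - l 2),
        (l 0 * c 1 - l 1 * c 0) / (l 0 - l 1)])
    (γ M : ℝ → V3)
    (hγ : ∀ t : ℝ, HasDerivAt γ (a • cross3 (γ t) (M t)) t)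
    (hM : ∀ t : ℝ, HasDerivAt M (a • (cross3 (B.mulVec (γ t)) (M t) +
      cross3 ((Matrix.diagonal c).mulVec (M t)) (γ t))) t)
    (t : ℝ) :
    HasDerivAt (fun s =>
      l 0 * (M s 0) ^ 2 + l 1 * (M s 1) ^ 2 + l 2 * (M s 2) ^ 2) 0 t :=
  kozeqm_F1_first_integral_general a c l h01 h02 h12 B hB γ M hM t
end
end

section
/- Let a ≠ 0 and Λ = diag(λ1,λ2,λ3) with all λ_i ≠ 0. Then (Kozlov's integral) F2 = (M,M) − 2(M,Λγ) + det(Λ)·(γ, Λ^{-1}γ) = (M,M) − 2(M,Λγ) + λ2λ3γ1² + λ1λ3γ2² + λ1λ2γ3² is a first integral of the equations γ̇ = a(γ×M), Ṁ = a(ΛM)×γ (the equations (koz-eqm) with B = 0 and C = Λ). -/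
noncomputable section

/-! Along the flow, `d/dt (M, M) = 2a (M, ΛM × γ)`, and the part of `d/dt (M, Λγ)` coming from
`γ̇` is `a (ΛM, γ × M)`; for symmetric `Λ` the cyclic symmetry of the triple product makes these
cancel in `F₂`. The other part, `(Ṁ, Λγ) = a (ΛM × γ, Λγ)`, is cancelled by the derivative of
`(γ, adj Λ γ)`, because `Λx × Λy = (adj Λ)ᵀ (x × y)`. -/

open Matrix

theorem HasDerivAt.dotProduct {n : Type*} [Fintype n] {u v : ℝ → n → ℝ} {u' v' : n → ℝ}
    {t : ℝ} (hu : HasDerivAt u u' t) (hv : HasDerivAt v v' t) :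
    HasDerivAt (fun s => u s ⬝ᵥ v s) (u' ⬝ᵥ v t + u t ⬝ᵥ v') t :=
  (HasDerivAt.fun_sum (u := Finset.univ) fun i _ =>
    (hasDerivAt_pi.mp hu i).mul (hasDerivAt_pi.mp hv i)).congr_deriv Finset.sum_add_distrib

theorem HasDerivAt.mulVec {m n : Type*} [Fintype n] (A : Matrix m n ℝ) {u : ℝ → n → ℝ}
    {u' : n → ℝ} {t : ℝ} (hu : HasDerivAt u u' t) :
    HasDerivAt (fun s => A *ᵥ u s) (A *ᵥ u') t :=
  hasDerivAt_pi.mpr fun i =>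
    ((hasDerivAt_const t (fun j => A i j)).dotProduct hu).congr_deriv
      (by rw [zero_dotProduct, zero_add]; rfl)

section CrossProduct

variable {R : Type*} [CommRing R]

theorem mulVec_cross_mulVec (A : Matrix (Fin 3) (Fin 3) R) (x y : Fin 3 → R) :
    (A *ᵥ x) ⨯₃ (A *ᵥ y) = (adjugate A)ᵀ *ᵥ (x ⨯₃ y) := by
  ext i
  fin_cases i <;>
    simp [adjugate_fin_three, cross_apply, mulVec, dotProduct, Fin.sum_univ_three] <;> ring

theorem Matrix.IsSymm.dotProduct_mulVec_comm {n : Type*} [Fintype n] {A : Matrix n n R}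
    (hA : A.IsSymm) (x y : n → R) : x ⬝ᵥ A *ᵥ y = A *ᵥ x ⬝ᵥ y := by
  rw [dotProduct_mulVec, ← vecMul_transpose, hA.eq]

theorem Matrix.IsSymm.dotProduct_mulVec_cross_self {A : Matrix (Fin 3) (Fin 3) R}
    (hA : A.IsSymm) (x y : Fin 3 → R) : x ⬝ᵥ A *ᵥ (y ⨯₃ x) = x ⬝ᵥ (A *ᵥ x) ⨯₃ y := by
  rw [hA.dotProduct_mulVec_comm]
  exact (triple_product_permutation _ _ _).symm

theorem mulVec_cross_dotProduct_mulVec (A : Matrix (Fin 3) (Fin 3) R) (x y : Fin 3 → R) :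
    (A *ᵥ x) ⨯₃ y ⬝ᵥ A *ᵥ y = adjugate A *ᵥ y ⬝ᵥ y ⨯₃ x := by
  rw [dotProduct_comm, triple_product_permutation, triple_product_permutation,
    mulVec_cross_mulVec, dotProduct_mulVec, vecMul_transpose]

theorem dotProduct_adjugate_diagonal_mulVec_self (l x : Fin 3 → R) :
    x ⬝ᵥ adjugate (diagonal l) *ᵥ x =
      l 1 * l 2 * x 0 ^ 2 + l 0 * l 2 * x 1 ^ 2 + l 0 * l 1 * x 2 ^ 2 := by
  rw [adjugate_fin_three]
  simp [mulVec, dotProduct, Fin.sum_univ_three]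
  ring

end CrossProduct

/-- `(γ, adj Λ γ)` is the paper's `det Λ · (γ, Λ⁻¹ γ)`, extended to singular `Λ`. -/
def kozlovIntegral (Λ : Matrix (Fin 3) (Fin 3) ℝ) (γ M : Fin 3 → ℝ) : ℝ :=
  M ⬝ᵥ M - 2 * (M ⬝ᵥ Λ *ᵥ γ) + γ ⬝ᵥ adjugate Λ *ᵥ γ

theorem hasDerivAt_kozlovIntegral {Λ : Matrix (Fin 3) (Fin 3) ℝ} (hΛ : Λ.IsSymm) (a : ℝ)
    {γ M : ℝ → Fin 3 → ℝ} {t : ℝ} (hγ : HasDerivAt γ (a • γ t ⨯₃ M t) t)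
    (hM : HasDerivAt M (a • (Λ *ᵥ M t) ⨯₃ γ t) t) :
    HasDerivAt (fun s => kozlovIntegral Λ (γ s) (M s)) 0 t := by
  refine (((hM.dotProduct hM).sub ((hM.dotProduct (hγ.mulVec Λ)).const_mul 2)).add
    (hγ.dotProduct (hγ.mulVec (adjugate Λ)))).congr_deriv ?_
  have hkin := hΛ.dotProduct_mulVec_cross_self (M t) (γ t)
  have hpot := mulVec_cross_dotProduct_mulVec Λ (M t) (γ t)
  have hadj := hΛ.adjugate.dotProduct_mulVec_comm (γ t) (γ t ⨯₃ M t)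
  simp only [mulVec_smul, dotProduct_smul, smul_dotProduct, smul_eq_mul]
  rw [dotProduct_comm _ (M t), dotProduct_comm _ (adjugate Λ *ᵥ γ t)]
  linear_combination (-2 * a) * hkin - (2 * a) * hpot + a * hadj

theorem dot3_eq_dotProduct (x y : V3) : dot3 x y = x ⬝ᵥ y := by
  simp [dot3, dotProduct, Fin.sum_univ_three]

theorem kozeqm_kozlov_integral_general
    (a : ℝ) (l : V3)
    (γ M : ℝ → V3)
    (hγ : ∀ t : ℝ, HasDerivAt γ (a • cross3 (γ t) (M t)) t)
    (hM : ∀ t : ℝ, HasDerivAt M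
      (a • cross3 ((Matrix.diagonal l).mulVec (M t)) (γ t)) t)
    (t : ℝ) :
    HasDerivAt (fun s =>
      dot3 (M s) (M s) - 2 * dot3 (M s) ((Matrix.diagonal l).mulVec (γ s)) +
        (l 1 * l 2 * (γ s 0) ^ 2 + l 0 * l 2 * (γ s 1) ^ 2 + l 0 * l 1 * (γ s 2) ^ 2))
      0 t := by
  convert hasDerivAt_kozlovIntegral (isSymm_diagonal l) a (hγ t) (hM t) using 2 with s
  rw [kozlovIntegral, dot3_eq_dotProduct, dot3_eq_dotProduct,
    dotProduct_adjugate_diagonal_mulVec_self]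

/-- Kozlov's integral. For `γ̇ = a(γ×M)`, `Ṁ = a(ΛM)×γ`
(i.e. (koz-eqm) with `B = 0`, `C = Λ = diag(λ1,λ2,λ3)`, all `λ_i ≠ 0`), the function
`F2 = (M,M) − 2(M,Λγ) + det(Λ)(γ,Λ⁻¹γ) = (M,M) − 2(M,Λγ) + λ2λ3γ1² + λ1λ3γ2² + λ1λ2γ3²`
is a first integral. -/
theorem kozeqm_kozlov_integral
    (a : ℝ) (ha : a ≠ 0) (l : V3) (hl : ∀ i, l i ≠ 0)
    (γ M : ℝ → V3)
    (hγ : ∀ t : ℝ, HasDerivAt γ (a • cross3 (γ t) (M t)) t)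
    (hM : ∀ t : ℝ, HasDerivAt M
      (a • cross3 ((Matrix.diagonal l).mulVec (M t)) (γ t)) t)
    (t : ℝ) :
    HasDerivAt (fun s =>
      dot3 (M s) (M s) - 2 * dot3 (M s) ((Matrix.diagonal l).mulVec (γ s)) +
        (l 1 * l 2 * (γ s 0) ^ 2 + l 0 * l 2 * (γ s 1) ^ 2 + l 0 * l 1 * (γ s 2) ^ 2))
      0 t :=
  kozeqm_kozlov_integral_general a l γ M hγ hM t
end
end
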